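/- Let μ be a probability measure on [0,1] with density ρ(x) proportional to x^{-α} for α ∈ (1/2,1). Then there exists a constant k > 0 such that for all sufficiently small r > 0, ∫ μ(B(x,r)) dμ(x) ≥ k·r^{2(1−α)}. -/

import Mathlib

/-!
If every point of a measurable set `s` has `s` inside its `r`-ball, then integrating
`μ(B(x,r)) ≥ μ(s)` over `s` gives `μ(s)² ≤ ∫ μ(B(x,r)) dμ(x)`. For `s = (0,r)` the density is at
least `c r^{-α}` on `s`, so `μ(s) ≥ c r^{1-α}`, and hence the correlation integral is at least
`c² r^{2(1-α)}`.
-/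

open MeasureTheory Filter Metric Topology

/-- Correlation integral: `∫ μ(B(x,r)) dμ(x)`. -/
noncomputable def corrIntegral {X : Type*} [PseudoMetricSpace X] [MeasurableSpace X]
    (μ : Measure X) (r : ℝ) : ℝ :=
  ∫ x, (μ (ball x r)).toReal ∂μ

section CorrelationIntegral

variable {X : Type*} [PseudoMetricSpace X] [MeasurableSpace X]
  [SecondCountableTopology X] [OpensMeasurableSpace X]

theorem measurable_measure_ball (μ : Measure X) [SFinite μ] (r : ℝ) :
    Measurable fun x => μ (ball x r) :=
  measurable_measure_prodMk_left (s := {p : X × X | dist p.2 p.1 < r})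
    (isOpen_lt (by fun_prop) continuous_const).measurableSet

theorem sq_measureReal_le_corrIntegral (μ : Measure X) [IsFiniteMeasure μ] {r : ℝ} {s : Set X}
    (hs : MeasurableSet s) (hs_ball : ∀ x ∈ s, s ⊆ ball x r) :
    μ.real s ^ 2 ≤ corrIntegral μ r := by
  have hint : Integrable (fun x => μ.real (ball x r)) μ :=
    (integrable_const (μ.real Set.univ)).mono'
      (measurable_measure_ball μ r).ennreal_toReal.aestronglyMeasurable
      (ae_of_all _ fun x => by
        simpa [abs_of_nonneg measureReal_nonneg] using
          measureReal_mono (μ := μ) (Set.subset_univ (ball x r)))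
  calc μ.real s ^ 2 = μ.real s * μ.real s := sq _
    _ ≤ ∫ x in s, μ.real (ball x r) ∂μ :=
        setIntegral_ge_of_const_le_real hs (measure_ne_top μ s)
          (fun x hx => measureReal_mono (hs_ball x hx)) hint.integrableOn
    _ ≤ corrIntegral μ r :=
        setIntegral_le_integral hint (ae_of_all _ fun _ => measureReal_nonneg)

end CorrelationIntegral

theorem Ioo_subset_ball_of_mem {a b x : ℝ} (hx : x ∈ Set.Ioo a b) :
    Set.Ioo a b ⊆ ball x (b - a) := by
  rw [Real.ball_eq_Ioo]
  exact Set.Ioo_subset_Ioo (by linarith [hx.2]) (by linarith [hx.1])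

theorem ofReal_mul_rpow_le_withDensity_Ioo {α c r : ℝ} (hα : 0 ≤ α) (hc : 0 ≤ c) (hr : 0 < r)
    (hr1 : r ≤ 1) :
    ENNReal.ofReal (c * r ^ (1 - α)) ≤ volume.withDensity
      (fun x => ENNReal.ofReal (Set.indicator (Set.Icc (0:ℝ) 1) (fun x => c * x ^ (-α)) x))
      (Set.Ioo 0 r) := by
  rw [withDensity_apply _ measurableSet_Ioo]
  calc ENNReal.ofReal (c * r ^ (1 - α))
        = ∫⁻ _ in Set.Ioo 0 r, ENNReal.ofReal (c * r ^ (-α)) := by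
        rw [setLIntegral_const, Real.volume_Ioo, sub_zero, ← ENNReal.ofReal_mul (by positivity),
          Real.rpow_sub hr, Real.rpow_one, Real.rpow_neg hr.le]
        ring_nf
    _ ≤ _ := by
        refine setLIntegral_mono' measurableSet_Ioo fun x (hx : x ∈ Set.Ioo 0 r) =>
          ENNReal.ofReal_le_ofReal ?_
        rw [Set.indicator_of_mem (show x ∈ Set.Icc (0 : ℝ) 1 from ⟨hx.1.le, hx.2.le.trans hr1⟩)]
        exact mul_le_mul_of_nonneg_left
          (Real.rpow_le_rpow_of_nonpos hx.1 hx.2.le (by linarith)) hc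

/-- For the probability measure on `[0,1]` with density proportional to `x ^ (-α)`,
`α ∈ (1/2, 1)`, there is `k > 0` with `∫ μ(B(x,r)) dμ(x) ≥ k r^{2(1-α)}` for all small `r > 0`. -/
theorem correlation_integral_lower_bound (α c : ℝ)
    (hα : α ∈ Set.Ioo (1/2 : ℝ) 1) (hc : 0 < c)
    (μ : Measure ℝ)
    (hμ : μ = volume.withDensity
      (fun x => ENNReal.ofReal (Set.indicator (Set.Icc (0:ℝ) 1) (fun x => c * x ^ (-α)) x)))
    (hprob : IsProbabilityMeasure μ) :
    ∃ K > (0:ℝ), ∃ r₀ > (0:ℝ), ∀ r : ℝ, 0 < r → r < r₀ →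
      K * r ^ (2 * (1 - α)) ≤ corrIntegral μ r := by
  refine ⟨c ^ 2, by positivity, 1, one_pos, fun r hr hr1 => ?_⟩
  have hmass : c * r ^ (1 - α) ≤ μ.real (Set.Ioo 0 r) := by
    rw [measureReal_def, ← ENNReal.ofReal_le_iff_le_toReal (measure_ne_top μ _), hμ]
    exact ofReal_mul_rpow_le_withDensity_Ioo (by linarith [hα.1]) hc.le hr hr1.le
  calc c ^ 2 * r ^ (2 * (1 - α)) = (c * r ^ (1 - α)) ^ 2 := by
        rw [mul_comm 2, Real.rpow_mul hr.le, Real.rpow_two, mul_pow]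
    _ ≤ μ.real (Set.Ioo 0 r) ^ 2 := by gcongr
    _ ≤ corrIntegral μ r := sq_measureReal_le_corrIntegral μ measurableSet_Ioo
        fun x hx => by simpa using Ioo_subset_ball_of_mem hx
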